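/- arXiv:1601.02320 — 2 statements merged into one kernel-verified Lean document; each statement's English description precedes it below -/
import Mathlib

section
/- The F_p-linear map F_r → F_p^D sending a to the codeword c_a = (Tr(a x²))_{x ∈ D} is injective; equivalently, if a ∈ F_r satisfies Tr(a x²) = 0 for all x ∈ D then a = 0, so the code C_D has exactly p^m codewords and dimension m over F_p. -/
/-!
Write `Q(y) = Tr(a y²)`. If `Tr x = t ≠ 0`, then `t x` has trace `t²`, a nonzero square, and
`Q(t x) = t² Q(x)`; so `Q` vanishes off the hyperplane `ker Tr`. For `y` in that hyperplane and any
`e` off it, `y ± e` are off it, and the parallelogram law `Q(y+e) + Q(y-e) = 2Q(y) + 2Q(e)` gives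
`Q(y) = 0` (here `p` is odd). Hence `Q ≡ 0`, polarization gives `Tr(a z) = 0` for all `z`, and
nondegeneracy of the trace form gives `a = 0`. The counting and dimension statements follow from
injectivity and `|F| = p ^ dim F`.
-/

open Algebra

section LinearFunctional

variable {K L : Type*} [Field K] [CommRing L] [Algebra K L] (f : L →ₗ[K] K) {a : L}

theorem map_mul_sq_eq_zero_of_map_ne_zero
    (h : ∀ x, IsSquare (f x) → f x ≠ 0 → f (a * x ^ 2) = 0) {y : L} (hy : f y ≠ 0) :
    f (a * y ^ 2) = 0 := by
  have hty : f (f y • y) = f y ^ 2 := by rw [map_smul, smul_eq_mul, sq]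
  have key := h (f y • y) (hty ▸ IsSquare.sq _) (hty ▸ pow_ne_zero 2 hy)
  rw [smul_pow, mul_smul_comm, map_smul, smul_eq_mul] at key
  exact (mul_eq_zero.mp key).resolve_left (pow_ne_zero 2 hy)

theorem map_mul_sq_eq_zero_of_forall_map_ne_zero (h2 : (2 : K) ≠ 0) {e : L} (he : f e ≠ 0)
    (h : ∀ x, f x ≠ 0 → f (a * x ^ 2) = 0) (y : L) : f (a * y ^ 2) = 0 := by
  by_cases hy : f y = 0
  · have parallelogram :
        a * (y + e) ^ 2 + a * (y - e) ^ 2 = (2 : K) • (a * y ^ 2) + (2 : K) • (a * e ^ 2) := by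
      simp only [two_smul]; ring
    have hsum := congrArg f parallelogram
    rw [map_add, map_add, map_smul, map_smul, h _ (by simpa [hy] using he),
      h _ (by simpa [hy] using he), h e he] at hsum
    simpa [h2] using hsum.symm
  · exact h y hy

end LinearFunctional

section FieldExtension

variable {K L : Type*} [Field K] [Field L] [Algebra K L] [FiniteDimensional K L]
  [Algebra.IsSeparable K L]

theorem eq_zero_of_forall_trace_mul_sq_eq_zero (h2 : (2 : K) ≠ 0) {a : L}
    (h : ∀ y, trace K L (a * y ^ 2) = 0) : a = 0 := by
  refine (traceForm_nondegenerate K L).1 a fun z => ?_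
  rw [traceForm_apply]
  have polarization :
      (2 : K) • (a * z) = a * (1 + z) ^ 2 - a * 1 ^ 2 - a * z ^ 2 := by
    simp only [two_smul]; ring
  have hz := congrArg (trace K L) polarization
  rw [map_smul, map_sub, map_sub, h, h, h, sub_zero, sub_zero, smul_eq_mul] at hz
  simpa [h2] using hz

theorem eq_zero_of_forall_isSquare_trace_mul_sq_eq_zero (h2 : (2 : K) ≠ 0) {a : L}
    (h : ∀ x, IsSquare (trace K L x) → trace K L x ≠ 0 → trace K L (a * x ^ 2) = 0) :
    a = 0 := by
  obtain ⟨e, he⟩ := DFunLike.ne_iff.mp (trace_ne_zero K L)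
  exact eq_zero_of_forall_trace_mul_sq_eq_zero h2
    (map_mul_sq_eq_zero_of_forall_map_ne_zero _ h2 he
      fun _ => map_mul_sq_eq_zero_of_map_ne_zero _ h)

variable (K L)

/-- The defining set `D = {x ∈ L^* : Tr x ∈ Sq}` of the code. -/
def traceSqDomain : Set L := {x | x ≠ 0 ∧ IsSquare (trace K L x) ∧ trace K L x ≠ 0}

/-- The encoding map `a ↦ c_a = (Tr(a x²))_{x ∈ D}`. -/
noncomputable def codewordMap : L →ₗ[K] (traceSqDomain K L → K) :=
  LinearMap.pi fun x => (trace K L).comp (LinearMap.mulRight K ((x : L) ^ 2))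

theorem codewordMap_injective (h2 : (2 : K) ≠ 0) : Function.Injective (codewordMap K L) := by
  refine (injective_iff_map_eq_zero _).mpr fun a ha => eq_zero_of_forall_isSquare_trace_mul_sq_eq_zero h2 ?_
  intro x hsq hx
  exact congrFun ha ⟨x, fun hx0 => hx (hx0 ▸ map_zero _), hsq, hx⟩

end FieldExtension

theorem stmt_2_general (p m : ℕ) [Fact p.Prime] (hp2 : p ≠ 2)
    (F : Type) [Field F] [Fintype F] [Algebra (ZMod p) F]
    (hcard : Fintype.card F = p ^ m) :
    Function.Injective (fun a : F =>
        fun x : {x : F // x ≠ 0 ∧ IsSquare (Algebra.trace (ZMod p) F x) ∧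
            Algebra.trace (ZMod p) F x ≠ 0} =>
          Algebra.trace (ZMod p) F (a * (x : F) ^ 2)) ∧
    (∀ a : F, (∀ x : F, x ≠ 0 → IsSquare (Algebra.trace (ZMod p) F x) →
        Algebra.trace (ZMod p) F x ≠ 0 → Algebra.trace (ZMod p) F (a * x ^ 2) = 0) →
        a = 0) ∧
    Set.ncard (Set.range (fun a : F =>
        fun x : {x : F // x ≠ 0 ∧ IsSquare (Algebra.trace (ZMod p) F x) ∧
            Algebra.trace (ZMod p) F x ≠ 0} =>
          Algebra.trace (ZMod p) F (a * (x : F) ^ 2))) = p ^ m ∧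
    Module.finrank (ZMod p)
      (LinearMap.range (LinearMap.pi
        (fun x : {x : F // x ≠ 0 ∧ IsSquare (Algebra.trace (ZMod p) F x) ∧
            Algebra.trace (ZMod p) F x ≠ 0} =>
          (Algebra.trace (ZMod p) F).comp (LinearMap.mulRight (ZMod p) ((x : F) ^ 2)))))
      = m := by
  have : FiniteDimensional (ZMod p) F := Module.Finite.of_finite
  have h2 : (2 : ZMod p) ≠ 0 := Ring.two_ne_zero (by rwa [ZMod.ringChar_zmod_n])
  have hinj := codewordMap_injective (ZMod p) F h2
  refine ⟨hinj, fun a ha => eq_zero_of_forall_isSquare_trace_mul_sq_eq_zero h2 fun x hsq hx =>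
    ha x (fun hx0 => hx (hx0 ▸ map_zero _)) hsq hx, ?_, ?_⟩
  · exact (Set.ncard_range_of_injective hinj).trans (Nat.card_eq_fintype_card.trans hcard)
  · exact (LinearMap.finrank_range_of_inj hinj).trans <| Nat.pow_right_injective
      (Fact.out : p.Prime).two_le ((FiniteField.pow_finrank_eq_card p F).trans hcard)

/-- The `F_p`-linear map `F_r → F_p^D`, `a ↦ (Tr(a x²))_{x ∈ D}`, is
injective; equivalently if `Tr(a x²) = 0` for all `x ∈ D` then `a = 0`; so the code
`C_D` has exactly `p^m` codewords and dimension `m` over `F_p`. -/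
theorem stmt_2 (p m : ℕ) [Fact p.Prime] (hp2 : p ≠ 2) (hm : 2 ≤ m)
    (F : Type) [Field F] [Fintype F] [Algebra (ZMod p) F]
    (hcard : Fintype.card F = p ^ m) :
    Function.Injective (fun a : F =>
        fun x : {x : F // x ≠ 0 ∧ IsSquare (Algebra.trace (ZMod p) F x) ∧
            Algebra.trace (ZMod p) F x ≠ 0} =>
          Algebra.trace (ZMod p) F (a * (x : F) ^ 2)) ∧
    (∀ a : F, (∀ x : F, x ≠ 0 → IsSquare (Algebra.trace (ZMod p) F x) →
        Algebra.trace (ZMod p) F x ≠ 0 → Algebra.trace (ZMod p) F (a * x ^ 2) = 0) →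
        a = 0) ∧
    Set.ncard (Set.range (fun a : F =>
        fun x : {x : F // x ≠ 0 ∧ IsSquare (Algebra.trace (ZMod p) F x) ∧
            Algebra.trace (ZMod p) F x ≠ 0} =>
          Algebra.trace (ZMod p) F (a * (x : F) ^ 2))) = p ^ m ∧
    Module.finrank (ZMod p)
      (LinearMap.range (LinearMap.pi
        (fun x : {x : F // x ≠ 0 ∧ IsSquare (Algebra.trace (ZMod p) F x) ∧
            Algebra.trace (ZMod p) F x ≠ 0} =>
          (Algebra.trace (ZMod p) F).comp (LinearMap.mulRight (ZMod p) ((x : F) ^ 2)))))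
      = m :=
  stmt_2_general p m hp2 F hcard
end

section
/- Let a ∈ F_r^* with Tr(a^{−1}) = 0. Then for every ρ ∈ F_p^*, N(ρ) = N_1(ρ) = (p−1)p^{m−2}/2. Moreover, #{a ∈ F_r^* : Tr(a^{−1}) = 0} = p^{m−1} − 1. -/
/-!
If `Tr a⁻¹ = 0`, translating `x` by `s • a⁻¹` (`s ∈ 𝔽_p`) fixes `Tr x` and, on the hyperplane
`Tr x = c`, shifts `Tr (a x²)` by `2 s c`. Hence for `c ≠ 0` the value `Tr (a x²)` is
equidistributed on that hyperplane of `p ^ (m - 1)` elements, so each pair of values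
`(Tr x, Tr (a x²)) = (c, ρ)` is taken `p ^ (m - 2)` times. Summing over the `(p - 1) / 2` nonzero
squares (resp. nonsquares) `c` gives `N(ρ)` and `N₁(ρ)`. Finally `a ↦ a⁻¹` identifies the `a`
with `Tr a⁻¹ = 0` with the nonzero elements of the trace-zero hyperplane.
-/

/-- `N(ρ) = #{x ∈ F_r : Tr(x) ∈ Sq and Tr(a x²) = ρ}`. -/
noncomputable def Nsq' (p : ℕ) (F : Type) [Field F] [Algebra (ZMod p) F]
    (a : F) (ρ : ZMod p) : ℕ :=
  Set.ncard {x : F | (IsSquare (Algebra.trace (ZMod p) F x) ∧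
    Algebra.trace (ZMod p) F x ≠ 0) ∧ Algebra.trace (ZMod p) F (a * x ^ 2) = ρ}

/-- `N_1(ρ) = #{x ∈ F_r : Tr(x) ∈ Nsq and Tr(a x²) = ρ}`. -/
noncomputable def Nnsq (p : ℕ) (F : Type) [Field F] [Algebra (ZMod p) F]
    (a : F) (ρ : ZMod p) : ℕ :=
  Set.ncard {x : F | ¬ IsSquare (Algebra.trace (ZMod p) F x) ∧
    Algebra.trace (ZMod p) F (a * x ^ 2) = ρ}

open Finset

theorem AddMonoidHom.card_mul_card_fiber_of_surjective {G M : Type*} [AddGroup G] [Fintype G]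
    [AddMonoid M] [Fintype M] [DecidableEq M] (f : G →+ M) (hf : Function.Surjective f) (y : M) :
    Fintype.card M * #{g | f g = y} = Fintype.card G := by
  have hfibres := card_eq_sum_card_fiberwise (s := (univ : Finset G)) (t := univ) (f := f) (by simp)
  rw [card_univ, sum_congr rfl fun z _ => card_fiber_eq_of_mem_range f (hf z) (hf y), sum_const,
    card_univ, smul_eq_mul] at hfibres
  exact hfibres.symm

theorem Algebra.trace_mul_add_smul_inv_sq {K L : Type*} [Field K] [Field L] [Algebra K L]
    {a : L} (ha : a ≠ 0) (x : L) (s : K) :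
    trace K L (a * (x + s • a⁻¹) ^ 2) =
      trace K L (a * x ^ 2) + 2 * s * trace K L x + s ^ 2 * trace K L a⁻¹ := by
  have hexpand : a * (x + s • a⁻¹) ^ 2 = a * x ^ 2 + (2 * s) • x + s ^ 2 • a⁻¹ := by
    simp only [Algebra.smul_def, map_mul, map_pow, map_ofNat]
    field_simp
    ring
  rw [hexpand, map_add, map_add, map_smul, map_smul, smul_eq_mul, smul_eq_mul]

namespace FiniteField

section Squares

variable {F : Type*} [Field F] [Fintype F] [DecidableEq F]

theorem isSquare_and_ne_zero_iff_quadraticChar_eq_one {x : F} :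
    IsSquare x ∧ x ≠ 0 ↔ quadraticChar F x = 1 := by
  refine ⟨fun h => (quadraticChar_one_iff_isSquare h.2).2 h.1, fun h => ?_⟩
  have hx : x ≠ 0 := by rintro rfl; simp at h
  exact ⟨(quadraticChar_one_iff_isSquare hx).1 h, hx⟩

theorem card_nonsquares_eq_card_nonzero_squares (hF : ringChar F ≠ 2) :
    #{c : F | ¬IsSquare c} = #{c : F | IsSquare c ∧ c ≠ 0} := by
  obtain ⟨g, hg⟩ := quadraticChar_exists_neg_one hF
  have hg0 : g ≠ 0 := by rintro rfl; simp at hg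
  refine card_equiv (Equiv.mulLeft₀ g hg0) fun c => ?_
  simp only [mem_filter, mem_univ, true_and, Equiv.mulLeft₀_apply,
    isSquare_and_ne_zero_iff_quadraticChar_eq_one, ← quadraticChar_neg_one_iff_not_isSquare,
    map_mul, hg]
  omega

theorem two_mul_card_nonsquares (hF : ringChar F ≠ 2) :
    2 * #{c : F | ¬IsSquare c} = Fintype.card F - 1 := by
  have hsplit : #{c : F | IsSquare c ∧ c ≠ 0} + #{c : F | ¬IsSquare c} = #{c : F | c ≠ 0} := by
    rw [← card_union_of_disjoint (disjoint_filter.2 fun c _ h => not_not.2 h.1)]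
    congr 1; ext c
    simp only [mem_union, mem_filter, mem_univ, true_and]
    by_cases hc : IsSquare c
    · simp [hc]
    · simpa [hc] using fun h0 : c = 0 => hc (h0 ▸ .zero)
  have hunits : #{c : F | c ≠ 0} = Fintype.card F - 1 := by
    rw [filter_ne', card_erase_of_mem (mem_univ _), card_univ]
  have := card_nonsquares_eq_card_nonzero_squares hF
  omega

end Squares

section Trace

open Algebra

variable {K L : Type*} [Field K] [Field L] [Algebra K L] [Fintype L] [DecidableEq K]

theorem card_trace_eq_and_trace_mul_sq_eq_independent (h2 : (2 : K) ≠ 0) {a : L} (ha : a ≠ 0)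
    (ha' : trace K L a⁻¹ = 0) {c : K} (hc : c ≠ 0) (ρ ρ' : K) :
    #{x : L | trace K L x = c ∧ trace K L (a * x ^ 2) = ρ} =
      #{x : L | trace K L x = c ∧ trace K L (a * x ^ 2) = ρ'} := by
  set s := (ρ' - ρ) / (2 * c)
  refine card_equiv (Equiv.addRight (s • a⁻¹)) fun x => ?_
  have htrace : trace K L (x + s • a⁻¹) = trace K L x := by
    rw [map_add, map_smul, ha', smul_zero, add_zero]
  simp only [mem_filter, mem_univ, true_and, Equiv.coe_addRight, htrace,
    trace_mul_add_smul_inv_sq ha, ha', mul_zero, add_zero]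
  refine and_congr_right fun hx => ?_
  have hshift : 2 * s * c = ρ' - ρ := by
    simp only [s]
    field_simp
  rw [hx, hshift]
  constructor <;> intro h <;> linear_combination h

variable [Fintype K]

theorem card_mul_card_trace_fiber (c : K) :
    Fintype.card K * #{x : L | trace K L x = c} = Fintype.card L := by
  have : FiniteDimensional K L := .of_finite
  exact (trace K L).toAddMonoidHom.card_mul_card_fiber_of_surjective (trace_surjective K L) c

theorem card_mul_card_trace_eq_and_trace_mul_sq_eq (h2 : (2 : K) ≠ 0) {a : L} (ha : a ≠ 0)
    (ha' : trace K L a⁻¹ = 0) {c : K} (hc : c ≠ 0) (ρ : K) :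
    Fintype.card K * #{x : L | trace K L x = c ∧ trace K L (a * x ^ 2) = ρ} =
      #{x : L | trace K L x = c} := by
  have hfibres := card_eq_sum_card_fiberwise (s := {x : L | trace K L x = c})
    (f := fun x => trace K L (a * x ^ 2)) (t := univ) (by simp)
  simp only [filter_filter] at hfibres
  rw [hfibres,
    sum_congr rfl fun ρ' _ => card_trace_eq_and_trace_mul_sq_eq_independent h2 ha ha' hc ρ' ρ,
    sum_const, card_univ, smul_eq_mul]

theorem card_sq_mul_card_trace_eq_and_trace_mul_sq_eq (h2 : (2 : K) ≠ 0) {a : L} (ha : a ≠ 0)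
    (ha' : trace K L a⁻¹ = 0) {c : K} (hc : c ≠ 0) (ρ : K) :
    Fintype.card K ^ 2 * #{x : L | trace K L x = c ∧ trace K L (a * x ^ 2) = ρ} =
      Fintype.card L := by
  rw [sq, mul_assoc, card_mul_card_trace_eq_and_trace_mul_sq_eq h2 ha ha' hc,
    card_mul_card_trace_fiber]

theorem card_sq_mul_card_trace_mem_and_trace_mul_sq_eq (h2 : (2 : K) ≠ 0) {a : L} (ha : a ≠ 0)
    (ha' : trace K L a⁻¹ = 0) (P : K → Prop) [DecidablePred P] (hP : ∀ c, P c → c ≠ 0) (ρ : K) :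
    Fintype.card K ^ 2 * #{x : L | P (trace K L x) ∧ trace K L (a * x ^ 2) = ρ} =
      #{c : K | P c} * Fintype.card L := by
  rw [card_eq_sum_card_fiberwise (f := trace K L) (t := {c : K | P c}) (by intro x; simp_all),
    mul_sum, sum_congr rfl fun c hc => ?_, sum_const, smul_eq_mul]
  rw [mem_filter] at hc
  rw [← card_sq_mul_card_trace_eq_and_trace_mul_sq_eq h2 ha ha' (hP c hc.2) ρ, filter_filter]
  refine congrArg (_ * #·) (filter_congr fun x _ => ?_)
  constructor
  · rintro ⟨⟨-, hρ⟩, hx⟩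
    exact ⟨hx, hρ⟩
  · rintro ⟨hx, hρ⟩
    exact ⟨⟨hx ▸ hc.2, hρ⟩, hx⟩

theorem card_mul_card_ne_zero_and_trace_inv_eq_zero_add_one [DecidableEq L] :
    Fintype.card K * (#{a : L | a ≠ 0 ∧ trace K L a⁻¹ = 0} + 1) = Fintype.card L := by
  have hinv : #{a : L | a ≠ 0 ∧ trace K L a⁻¹ = 0} = #{b : L | b ≠ 0 ∧ trace K L b = 0} :=
    card_equiv (Equiv.inv L) (by simp)
  have herase : ({b : L | b ≠ 0 ∧ trace K L b = 0} : Finset L) =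
      ({b : L | trace K L b = 0} : Finset L).erase 0 := by
    ext b; simp
  rw [hinv, herase, card_erase_add_one (by simp), card_mul_card_trace_fiber]

end Trace

end FiniteField

/-- if `a ∈ F_r^*` with `Tr(a⁻¹) = 0`, then for every `ρ ∈ F_p^*`
one has `N(ρ) = N_1(ρ) = (p-1)p^{m-2}/2`; moreover
`#{a ∈ F_r^* : Tr(a⁻¹) = 0} = p^{m-1} - 1`. -/
theorem stmt_17 (p m : ℕ) [Fact p.Prime] (hp2 : p ≠ 2) (hm : 2 ≤ m)
    (F : Type) [Field F] [Fintype F] [Algebra (ZMod p) F]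
    (hcard : Fintype.card F = p ^ m) :
    (∀ a : F, a ≠ 0 → Algebra.trace (ZMod p) F a⁻¹ = 0 → ∀ ρ : ZMod p, ρ ≠ 0 →
      Nsq' p F a ρ = (p - 1) / 2 * p ^ (m - 2) ∧
      Nnsq p F a ρ = (p - 1) / 2 * p ^ (m - 2)) ∧
    Set.ncard {a : F | a ≠ 0 ∧ Algebra.trace (ZMod p) F a⁻¹ = 0} = p ^ (m - 1) - 1 := by
  classical
  have hchar : ringChar (ZMod p) ≠ 2 := by rwa [ZMod.ringChar_zmod_n]
  have h2 : (2 : ZMod p) ≠ 0 := Ring.two_ne_zero hchar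
  have hcardK : Fintype.card (ZMod p) = p := ZMod.card p
  have hnonsq : #{c : ZMod p | ¬IsSquare c} = (p - 1) / 2 := by
    have := FiniteField.two_mul_card_nonsquares hchar
    omega
  have hsq : #{c : ZMod p | IsSquare c ∧ c ≠ 0} = (p - 1) / 2 := by
    rw [← FiniteField.card_nonsquares_eq_card_nonzero_squares hchar, hnonsq]
  have hp : 0 < p := (Fact.out : p.Prime).pos
  have cancel {N k : ℕ} (h : p ^ 2 * N = k * p ^ m) : N = k * p ^ (m - 2) := by
    rw [← Nat.add_sub_of_le hm, pow_add, mul_left_comm] at h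
    exact Nat.eq_of_mul_eq_mul_left (by positivity) h
  refine ⟨fun a ha ha' ρ _ => ⟨?_, ?_⟩, ?_⟩
  · have key := FiniteField.card_sq_mul_card_trace_mem_and_trace_mul_sq_eq h2 ha ha'
      (fun c => IsSquare c ∧ c ≠ 0) (fun _ hc => hc.2) ρ
    rw [hcardK, hcard, hsq] at key
    rw [Nsq', Set.ncard_eq_toFinset_card', Set.toFinset_ofPred, cancel key]
  · have key := FiniteField.card_sq_mul_card_trace_mem_and_trace_mul_sq_eq h2 ha ha'
      (fun c => ¬IsSquare c) (fun _ hc h0 => hc (h0 ▸ .zero)) ρ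
    rw [hcardK, hcard, hnonsq] at key
    rw [Nnsq, Set.ncard_eq_toFinset_card', Set.toFinset_ofPred, cancel key]
  · have key := FiniteField.card_mul_card_ne_zero_and_trace_inv_eq_zero_add_one
      (K := ZMod p) (L := F)
    rw [hcardK, hcard, ← Nat.sub_add_cancel (show 1 ≤ m by omega), pow_succ',
      Nat.mul_left_cancel_iff hp] at key
    rw [Set.ncard_eq_toFinset_card', Set.toFinset_ofPred]
    omega
end
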